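/- arXiv:2601.18770 — 5 statements merged into one kernel-verified Lean document; each statement's English description precedes it below -/
import Mathlib

section
/- Let X be an n×k real matrix of rank k (n > k), Z an n×(n−k) matrix with XᵀZ = 0 and rank(Z) = n−k, and Ω an n×n positive definite matrix. Then Ω can be written as Ω = XΓXᵀ + ZΔZᵀ + XΞZᵀ + ZΞᵀXᵀ for some positive definite k×k matrix Γ, positive definite (n−k)×(n−k) matrix Δ, and k×(n−k) matrix Ξ. -/
/-!
Put `C = [X Z]`. Since `Xᵀ Z = 0` and both blocks have full column rank, `C` is an injective
square matrix, hence invertible, so `Ω = C N Cᵀ` for the positive definite matrix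
`N = C⁻¹ Ω C⁻ᵀ`. Expanding `C N Cᵀ` blockwise gives the decomposition with `Γ`, `Δ` the diagonal
blocks of `N`, which are positive definite as principal submatrices, and `Ξ` its upper right
block, whose transpose is the lower left block by symmetry.
-/

open Matrix

namespace Matrix

variable {m k l : Type*}

theorem mulVec_injective_of_rank_eq_card {K : Type*} [Field K] [Fintype l] (A : Matrix m l K)
    (hA : A.rank = Fintype.card l) : Function.Injective A.mulVec := by
  have h := A.mulVecLin.finrank_range_add_finrank_ker
  rw [← Matrix.rank, hA, Module.finrank_fintype_fun_eq_card] at h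
  have hker : Module.finrank K (LinearMap.ker A.mulVecLin) = 0 := by omega
  exact LinearMap.ker_eq_bot.mp (Submodule.finrank_eq_zero.mp hker)

theorem mulVec_injective_fromCols {K : Type*} [Field K] [PartialOrder K] [StarRing K]
    [StarOrderedRing K] [Fintype m] [Fintype k] [Fintype l] {X : Matrix m k K}
    {Z : Matrix m l K} (hX : Function.Injective X.mulVec) (hZ : Function.Injective Z.mulVec)
    (hXZ : Xᴴ * Z = 0) : Function.Injective (fromCols X Z).mulVec := by
  rw [← coe_mulVecLin, ← LinearMap.ker_eq_bot, LinearMap.ker_eq_bot']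
  intro v hv
  rw [← Sum.elim_comp_inl_inr v] at hv ⊢
  rw [coe_mulVecLin, fromCols_mulVec_sumElim] at hv
  have hXa : X *ᵥ (v ∘ Sum.inl) = 0 := by
    rw [← conjTranspose_mul_self_mulVec_eq_zero, ← mulVec_mulVec]
    simpa [mulVec_add, mulVec_mulVec, hXZ] using congrArg (Xᴴ *ᵥ ·) hv
  have hZb : Z *ᵥ (v ∘ Sum.inr) = 0 := by simpa [hXa] using hv
  rw [hX.eq_iff' (mulVec_zero X)] at hXa
  rw [hZ.eq_iff' (mulVec_zero Z)] at hZb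
  rw [hXa, hZb]
  ext (i | i) <;> rfl

theorem PosDef.exists_eq_mul_mul_conjTranspose {K : Type*} [Field K] [PartialOrder K]
    [StarRing K] [Fintype m] [Fintype l] [DecidableEq m] [DecidableEq l]
    {Ω : Matrix m m K} (hΩ : Ω.PosDef) {C : Matrix m l K}
    (hcard : Fintype.card l = Fintype.card m) (hC : Function.Injective C.mulVec) :
    ∃ N : Matrix l l K, N.PosDef ∧ Ω = C * N * Cᴴ := by
  have hsurj : Function.Surjective C.mulVec :=
    (LinearMap.injective_iff_surjective_of_finrank_eq_finrank (f := C.mulVecLin)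
      (by simp [hcard])).mp hC
  obtain ⟨B, hCB⟩ := mulVec_surjective_iff_exists_right_inverse.mp hsurj
  have hBC : B * C = 1 := (mul_eq_one_comm_of_card_eq _ _ _ hcard.symm).mp hCB
  refine ⟨B * Ω * Bᴴ, hΩ.mul_mul_conjTranspose_same fun x y hxy => ?_, ?_⟩
  · simpa [vecMul_vecMul, hBC] using congrArg (· ᵥ* C) hxy
  · calc Ω = (C * B) * Ω * (C * B)ᴴ := by simp [hCB]
      _ = C * (B * Ω * Bᴴ) * Cᴴ := by simp only [conjTranspose_mul, Matrix.mul_assoc]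

theorem PosDef.toBlocks₁₁ {R : Type*} [Ring R] [PartialOrder R] [StarRing R] [Fintype k]
    [Fintype l] {N : Matrix (k ⊕ l) (k ⊕ l) R} (hN : N.PosDef) : N.toBlocks₁₁.PosDef :=
  hN.submatrix Sum.inl_injective

theorem PosDef.toBlocks₂₂ {R : Type*} [Ring R] [PartialOrder R] [StarRing R] [Fintype k]
    [Fintype l] {N : Matrix (k ⊕ l) (k ⊕ l) R} (hN : N.PosDef) : N.toBlocks₂₂.PosDef :=
  hN.submatrix Sum.inr_injective

theorem IsHermitian.toBlocks₂₁_eq {R : Type*} [InvolutiveStar R] {N : Matrix (k ⊕ l) (k ⊕ l) R}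
    (hN : N.IsHermitian) : N.toBlocks₂₁ = N.toBlocks₁₂ᴴ :=
  (isHermitian_fromBlocks_iff.mp ((fromBlocks_toBlocks N).symm ▸ hN)).2.1.symm

theorem fromCols_mul_mul_conjTranspose_fromCols {R : Type*} [Semiring R] [StarRing R]
    [Fintype k] [Fintype l] (X : Matrix m k R) (Z : Matrix m l R)
    (N : Matrix (k ⊕ l) (k ⊕ l) R) :
    fromCols X Z * N * (fromCols X Z)ᴴ =
      X * N.toBlocks₁₁ * Xᴴ + Z * N.toBlocks₂₂ * Zᴴ + X * N.toBlocks₁₂ * Zᴴ +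
        Z * N.toBlocks₂₁ * Xᴴ := by
  conv_lhs => rw [← fromBlocks_toBlocks N]
  rw [conjTranspose_fromCols_eq_fromRows_conjTranspose, fromCols_mul_fromBlocks,
    fromCols_mul_fromRows]
  simp only [Matrix.add_mul]
  abel

end Matrix

theorem stmt_0_general (n k : ℕ)
    (X : Matrix (Fin n) (Fin k) ℝ) (hX : X.rank = k)
    (Z : Matrix (Fin n) (Fin (n - k)) ℝ) (hXZ : Xᵀ * Z = 0) (hZ : Z.rank = n - k)
    (Ω : Matrix (Fin n) (Fin n) ℝ) (hΩ : Ω.PosDef) :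
    ∃ (Γ : Matrix (Fin k) (Fin k) ℝ) (Δ : Matrix (Fin (n - k)) (Fin (n - k)) ℝ)
      (Ξ : Matrix (Fin k) (Fin (n - k)) ℝ), Γ.PosDef ∧ Δ.PosDef ∧
      Ω = X * Γ * Xᵀ + Z * Δ * Zᵀ + X * Ξ * Zᵀ + Z * Ξᵀ * Xᵀ := by
  have hkn : k ≤ n := hX ▸ X.rank_le_height
  have hXinj := X.mulVec_injective_of_rank_eq_card (by simpa using hX)
  have hZinj := Z.mulVec_injective_of_rank_eq_card (by simpa using hZ)
  have hcard : Fintype.card (Fin k ⊕ Fin (n - k)) = Fintype.card (Fin n) := by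
    simp only [Fintype.card_sum, Fintype.card_fin]; omega
  obtain ⟨N, hN, rfl⟩ := hΩ.exists_eq_mul_mul_conjTranspose hcard
    (mulVec_injective_fromCols hXinj hZinj (by rwa [conjTranspose_eq_transpose_of_trivial]))
  refine ⟨N.toBlocks₁₁, N.toBlocks₂₂, N.toBlocks₁₂, hN.toBlocks₁₁, hN.toBlocks₂₂, ?_⟩
  rw [fromCols_mul_mul_conjTranspose_fromCols, hN.isHermitian.toBlocks₂₁_eq]
  simp only [conjTranspose_eq_transpose_of_trivial]

theorem stmt_0 (n k : ℕ) (hnk : k < n)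
    (X : Matrix (Fin n) (Fin k) ℝ) (hX : X.rank = k)
    (Z : Matrix (Fin n) (Fin (n - k)) ℝ) (hXZ : Xᵀ * Z = 0) (hZ : Z.rank = n - k)
    (Ω : Matrix (Fin n) (Fin n) ℝ) (hΩ : Ω.PosDef) :
    ∃ (Γ : Matrix (Fin k) (Fin k) ℝ) (Δ : Matrix (Fin (n - k)) (Fin (n - k)) ℝ)
      (Ξ : Matrix (Fin k) (Fin (n - k)) ℝ), Γ.PosDef ∧ Δ.PosDef ∧
      Ω = X * Γ * Xᵀ + Z * Δ * Zᵀ + X * Ξ * Zᵀ + Z * Ξᵀ * Xᵀ :=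
  stmt_0_general n k X hX Z hXZ hZ Ω hΩ
end

section
/- Let X be an n×k real matrix of rank k, Z an n×(n−k) matrix with XᵀZ = 0 and rank(Z) = n−k, and Ω positive definite. Then Ω = XΓXᵀ + ZΔZᵀ for some positive definite Γ and Δ if and only if XᵀΩZ = 0. -/
/-!
Let `P_X = X (XᵀX)⁻¹ Xᵀ` and `P_Z = Z (ZᵀZ)⁻¹ Zᵀ`. Since the column spaces of `X` and `Z` are
orthogonal and their dimensions add up to `n`, they span `ℝⁿ`, so `P_X + P_Z = 1` and
`Ω = (P_X + P_Z) Ω (P_X + P_Z)`. The cross terms `P_X Ω P_Z` and `P_Z Ω P_X` vanish exactly when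
`XᵀΩZ = 0`, which leaves `Ω = XΓXᵀ + ZΔZᵀ` with `Γ = (XᵀX)⁻¹ XᵀΩX (XᵀX)⁻¹` and `Δ` likewise;
these are positive definite as congruences of `Ω` by the injective maps `X (XᵀX)⁻¹`, `Z (ZᵀZ)⁻¹`.
-/

open Matrix Module

namespace Matrix

variable {m k l K : Type*} [Fintype k]

theorem mulVec_injective_of_rank_eq_card_s1 [Field K] {X : Matrix m k K}
    (hX : X.rank = Fintype.card k) : Function.Injective X.mulVec := by
  have h := LinearMap.finrank_range_add_finrank_ker X.mulVecLin
  rw [← rank, hX, finrank_fintype_fun_eq_card, add_eq_left, Submodule.finrank_eq_zero] at h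
  exact LinearMap.ker_eq_bot.mp h

variable [Fintype m]

theorem transpose_mul_mul_transpose_add_mul_eq_zero [Fintype l] [CommRing K] {X : Matrix m k K}
    {Z : Matrix m l K} (hXZ : Xᵀ * Z = 0) (Γ : Matrix k k K) (Δ : Matrix l l K) :
    Xᵀ * (X * Γ * Xᵀ + Z * Δ * Zᵀ) * Z = 0 := by
  simp only [Matrix.mul_add, Matrix.add_mul, Matrix.mul_assoc, hXZ]
  simp [← Matrix.mul_assoc, hXZ]

theorem range_mulVecLin_sup_eq_top [Fintype l] [Field K] [LinearOrder K] [IsStrictOrderedRing K]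
    {X : Matrix m k K} {Z : Matrix m l K} (hXZ : Xᵀ * Z = 0)
    (hrank : X.rank + Z.rank = Fintype.card m) :
    LinearMap.range X.mulVecLin ⊔ LinearMap.range Z.mulVecLin = ⊤ := by
  have hdisj : LinearMap.range X.mulVecLin ⊓ LinearMap.range Z.mulVecLin = ⊥ := by
    refine (Submodule.eq_bot_iff _).mpr fun u hu => ?_
    obtain ⟨⟨a, rfl⟩, ⟨b, hb⟩⟩ := Submodule.mem_inf.mp hu
    refine dotProduct_self_eq_zero.mp ?_
    nth_rewrite 2 [← hb]
    rw [mulVecLin_apply, mulVecLin_apply, dotProduct_mulVec, ← vecMul_transpose, vecMul_vecMul,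
      hXZ, vecMul_zero, zero_dotProduct]
  apply Submodule.eq_top_of_finrank_eq
  have := Submodule.finrank_sup_add_finrank_inf_eq (LinearMap.range X.mulVecLin)
    (LinearMap.range Z.mulVecLin)
  rw [hdisj, finrank_bot, add_zero] at this
  rw [this, finrank_fintype_fun_eq_card]
  exact hrank

variable [DecidableEq k]

/-- The orthogonal projection onto the column space of `X` (junk unless `Xᵀ * X` is invertible). -/
noncomputable def colProj [CommRing K] (X : Matrix m k K) : Matrix m m K :=
  X * (Xᵀ * X)⁻¹ * Xᵀ

theorem colProj_mul_self [CommRing K] {X : Matrix m k K} (hX : IsUnit (Xᵀ * X)) :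
    colProj X * X = X := by
  rw [colProj, Matrix.mul_assoc, Matrix.mul_assoc,
    nonsing_inv_mul _ ((isUnit_iff_isUnit_det _).mp hX), Matrix.mul_one]

theorem colProj_mul_eq_zero [CommRing K] {X : Matrix m k K} {Y : Matrix m l K}
    (hXY : Xᵀ * Y = 0) : colProj X * Y = 0 := by
  rw [colProj, Matrix.mul_assoc, hXY, Matrix.mul_zero]

theorem colProj_add_colProj [Fintype l] [DecidableEq l] [DecidableEq m] [Field K] [LinearOrder K]
    [IsStrictOrderedRing K] {X : Matrix m k K} {Z : Matrix m l K} (hXZ : Xᵀ * Z = 0)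
    (hrank : X.rank + Z.rank = Fintype.card m)
    (hX : IsUnit (Xᵀ * X)) (hZ : IsUnit (Zᵀ * Z)) :
    colProj X + colProj Z = 1 := by
  have hZX : Zᵀ * X = 0 := by simpa using congrArg transpose hXZ
  set M := 1 - (colProj X + colProj Z)
  have hMX : M * X = 0 := by
    simp [M, Matrix.sub_mul, Matrix.add_mul, colProj_mul_self hX, colProj_mul_eq_zero hZX]
  have hMZ : M * Z = 0 := by
    simp [M, Matrix.sub_mul, Matrix.add_mul, colProj_mul_self hZ, colProj_mul_eq_zero hXZ]
  have hker : LinearMap.ker M.mulVecLin = ⊤ := by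
    rw [eq_top_iff, ← range_mulVecLin_sup_eq_top hXZ hrank, sup_le_iff,
      LinearMap.range_le_ker_iff, LinearMap.range_le_ker_iff, ← mulVecLin_mul, ← mulVecLin_mul,
      hMX, hMZ, mulVecLin_zero, mulVecLin_zero]
    exact ⟨rfl, rfl⟩
  have hM : M = 0 := by
    ext i j
    simpa using congrFun (LinearMap.congr_fun (LinearMap.ker_eq_top.mp hker) (Pi.single j 1)) i
  exact (sub_eq_zero.mp hM).symm

theorem colProj_mul_mul_colProj_eq_zero [Fintype l] [DecidableEq l] [CommRing K]
    {X : Matrix m k K} {Z : Matrix m l K} {Ω : Matrix m m K} (h : Xᵀ * Ω * Z = 0) :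
    colProj X * Ω * colProj Z = 0 := by
  have : colProj X * Ω * colProj Z = X * (Xᵀ * X)⁻¹ * (Xᵀ * Ω * Z) * ((Zᵀ * Z)⁻¹ * Zᵀ) := by
    simp only [colProj, Matrix.mul_assoc]
  rw [this, h, Matrix.mul_zero, Matrix.zero_mul]

theorem eq_colProj_conj_add_colProj_conj [Fintype l] [DecidableEq l] [DecidableEq m] [CommRing K]
    {X : Matrix m k K} {Z : Matrix m l K} {Ω : Matrix m m K}
    (hPQ : colProj X + colProj Z = 1) (hΩ : Ω.IsSymm) (h : Xᵀ * Ω * Z = 0) :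
    Ω = X * ((Xᵀ * X)⁻¹ * (Xᵀ * Ω * X) * (Xᵀ * X)⁻¹) * Xᵀ
      + Z * ((Zᵀ * Z)⁻¹ * (Zᵀ * Ω * Z) * (Zᵀ * Z)⁻¹) * Zᵀ := by
  have h' : Zᵀ * Ω * X = 0 := by
    simpa [Matrix.transpose_mul, hΩ.eq, Matrix.mul_assoc] using congrArg transpose h
  calc Ω = (colProj X + colProj Z) * Ω * (colProj X + colProj Z) := by
        rw [hPQ, Matrix.one_mul, Matrix.mul_one]
    _ = colProj X * Ω * colProj X + colProj Z * Ω * colProj Z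
        + colProj X * Ω * colProj Z + colProj Z * Ω * colProj X := by
        simp only [Matrix.add_mul, Matrix.mul_add]; abel
    _ = _ := by
        rw [colProj_mul_mul_colProj_eq_zero h, colProj_mul_mul_colProj_eq_zero h']
        simp only [colProj, Matrix.mul_assoc, add_zero]

end Matrix

namespace Matrix.PosDef

variable {n : Type*} [Fintype n]

theorem inv_mul_mul_inv {K : Type*} [Field K] [PartialOrder K] [StarRing K] [DecidableEq n]
    {A M : Matrix n n K} (hA : A.PosDef) (hM : M.PosDef) :
    (A⁻¹ * M * A⁻¹).PosDef := by
  have := hM.conjTranspose_mul_mul_same (B := A⁻¹)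
    (mulVec_injective_iff_isUnit.mpr hA.inv.isUnit)
  rwa [hA.inv.1.eq] at this

theorem transpose_mul_mul_same {m : Type*} [Fintype m] {M : Matrix n n ℝ} (hM : M.PosDef)
    {X : Matrix n m ℝ} (hX : Function.Injective X.mulVec) : (Xᵀ * M * X).PosDef := by
  simpa only [conjTranspose_eq_transpose_of_trivial] using hM.conjTranspose_mul_mul_same hX

end Matrix.PosDef

theorem stmt_1_general (n k : ℕ)
    (X : Matrix (Fin n) (Fin k) ℝ) (hX : X.rank = k)
    (Z : Matrix (Fin n) (Fin (n - k)) ℝ) (hXZ : Xᵀ * Z = 0) (hZ : Z.rank = n - k)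
    (Ω : Matrix (Fin n) (Fin n) ℝ) (hΩ : Ω.PosDef) :
    (∃ (Γ : Matrix (Fin k) (Fin k) ℝ) (Δ : Matrix (Fin (n - k)) (Fin (n - k)) ℝ),
      Γ.PosDef ∧ Δ.PosDef ∧ Ω = X * Γ * Xᵀ + Z * Δ * Zᵀ) ↔ Xᵀ * Ω * Z = 0 := by
  have hXinj := mulVec_injective_of_rank_eq_card_s1 (X := X) (by simpa using hX)
  have hZinj := mulVec_injective_of_rank_eq_card_s1 (X := Z) (by simpa using hZ)
  have hA : (Xᵀ * X).PosDef := by simpa using PosDef.one.transpose_mul_mul_same hXinj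
  have hB : (Zᵀ * Z).PosDef := by simpa using PosDef.one.transpose_mul_mul_same hZinj
  have hkn : k ≤ n := hX ▸ X.rank_le_height
  have hPQ := colProj_add_colProj hXZ (by rw [hX, hZ, Fintype.card_fin]; omega) hA.isUnit hB.isUnit
  constructor
  · rintro ⟨Γ, Δ, -, -, rfl⟩
    exact transpose_mul_mul_transpose_add_mul_eq_zero hXZ Γ Δ
  · intro h
    exact ⟨_, _, hA.inv_mul_mul_inv (hΩ.transpose_mul_mul_same hXinj),
      hB.inv_mul_mul_inv (hΩ.transpose_mul_mul_same hZinj),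
      eq_colProj_conj_add_colProj_conj hPQ (isHermitian_iff_isSymm.mp hΩ.1) h⟩

theorem stmt_1 (n k : ℕ) (hnk : k < n)
    (X : Matrix (Fin n) (Fin k) ℝ) (hX : X.rank = k)
    (Z : Matrix (Fin n) (Fin (n - k)) ℝ) (hXZ : Xᵀ * Z = 0) (hZ : Z.rank = n - k)
    (Ω : Matrix (Fin n) (Fin n) ℝ) (hΩ : Ω.PosDef) :
    (∃ (Γ : Matrix (Fin k) (Fin k) ℝ) (Δ : Matrix (Fin (n - k)) (Fin (n - k)) ℝ),
      Γ.PosDef ∧ Δ.PosDef ∧ Ω = X * Γ * Xᵀ + Z * Δ * Zᵀ) ↔ Xᵀ * Ω * Z = 0 :=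
  stmt_1_general n k X hX Z hXZ hZ Ω hΩ
end

section
/- Let X be an n×k real matrix of rank k, Z an n×(n−k) matrix with XᵀZ = 0 and rank(Z) = n−k, and Ω positive definite. Then XᵀΩZ = 0 if and only if XᵀΩ⁻¹Z = 0. -/
/-!
Since `Xᵀ Z = 0` and the ranks of `X` and `Z` add up to `n`, the column space `S` of `Z` is exactly
the kernel of `Xᵀ`. Hence `Xᵀ A Z = 0` says precisely that `A` maps `S` into itself. An injective
endomorphism of the finite-dimensional space `S` is onto, so an invertible `A` with `A S ⊆ S` has
`A S = S`, and then also `A⁻¹ S = S`.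
-/

open Matrix

namespace Submodule

variable {K V : Type*} [DivisionRing K] [AddCommGroup V] [Module K V] {S : Submodule K V}
  [FiniteDimensional K S]

theorem map_eq_of_map_le_of_injective {f : V →ₗ[K] V} (hf : Function.Injective f)
    (hS : S.map f ≤ S) : S.map f = S :=
  eq_of_le_of_finrank_eq hS (equivMapOfInjective f hf S).finrank_eq.symm

theorem map_le_of_map_le_of_comp_eq_id {f g : V →ₗ[K] V} (hgf : g ∘ₗ f = LinearMap.id)
    (hS : S.map f ≤ S) : S.map g ≤ S := by
  have hf : Function.Injective f := LinearMap.injective_of_comp_eq_id f g hgf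
  refine le_of_eq ?_
  calc S.map g = (S.map f).map g := by rw [map_eq_of_map_le_of_injective hf hS]
    _ = S := by rw [← map_comp, hgf, map_id]

end Submodule

namespace Matrix

variable {K l m n : Type*} [Field K] [Fintype m] [Fintype n]

theorem mul_eq_zero_iff_range_mulVecLin_le_ker (M : Matrix l m K)
    (N : Matrix m n K) :
    M * N = 0 ↔ LinearMap.range N.mulVecLin ≤ LinearMap.ker M.mulVecLin := by
  classical
  rw [LinearMap.range_le_ker_iff, ← mulVecLin_mul, ← toLin'_apply', LinearEquiv.map_eq_zero_iff]

theorem range_mulVecLin_eq_ker_of_mul_eq_zero {M : Matrix l m K}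
    {N : Matrix m n K} (hMN : M * N = 0) (hrank : M.rank + N.rank = Fintype.card m) :
    LinearMap.range N.mulVecLin = LinearMap.ker M.mulVecLin := by
  have hle := (mul_eq_zero_iff_range_mulVecLin_le_ker M N).mp hMN
  have hnullity := LinearMap.finrank_range_add_finrank_ker M.mulVecLin
  rw [Module.finrank_fintype_fun_eq_card] at hnullity
  refine Submodule.eq_of_le_of_finrank_eq hle ?_
  rw [rank, rank] at hrank
  omega

end Matrix

theorem stmt_2 (n k : ℕ) (hnk : k < n)
    (X : Matrix (Fin n) (Fin k) ℝ) (hX : X.rank = k)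
    (Z : Matrix (Fin n) (Fin (n - k)) ℝ) (hXZ : Xᵀ * Z = 0) (hZ : Z.rank = n - k)
    (Ω : Matrix (Fin n) (Fin n) ℝ) (hΩ : Ω.PosDef) :
    Xᵀ * Ω * Z = 0 ↔ Xᵀ * Ω⁻¹ * Z = 0 := by
  set S := LinearMap.range Z.mulVecLin
  have hS : S = LinearMap.ker Xᵀ.mulVecLin := by
    refine range_mulVecLin_eq_ker_of_mul_eq_zero hXZ ?_
    rw [rank_transpose, hX, hZ, Fintype.card_fin]
    omega
  have hpreserves (A : Matrix (Fin n) (Fin n) ℝ) : Xᵀ * A * Z = 0 ↔ S.map A.mulVecLin ≤ S := by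
    rw [Matrix.mul_assoc, mul_eq_zero_iff_range_mulVecLin_le_ker, mulVecLin_mul,
      LinearMap.range_comp, ← hS]
  have hdet : IsUnit Ω.det := (isUnit_iff_isUnit_det Ω).mp hΩ.isUnit
  rw [hpreserves, hpreserves]
  constructor
  · refine Submodule.map_le_of_map_le_of_comp_eq_id ?_
    rw [← mulVecLin_mul, nonsing_inv_mul Ω hdet, mulVecLin_one]
  · refine Submodule.map_le_of_map_le_of_comp_eq_id ?_
    rw [← mulVecLin_mul, mul_nonsing_inv Ω hdet, mulVecLin_one]
end

section
/- Let X ∈ ℝ^{n×k} have rank k, K ∈ ℝ^{k×k} be positive semidefinite, and Ω ∈ ℝ^{n×n} be positive definite. If there exists a nonsingular G ∈ ℝ^{k×k} with ΩX = XG and K = KG, then the general ridge estimators coincide: (XᵀΩ⁻¹X + K)⁻¹XᵀΩ⁻¹y = (XᵀX + K)⁻¹Xᵀy for all y ∈ ℝⁿ. -/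
/-!
Transposing `Ω * X = X * G` through the symmetric matrix `Ω` gives `Xᵀ * Ω⁻¹ = M * Xᵀ` with
`M = G⁻¹ᵀ`, and `K = K * G` is the same relation with `Ω = 1`, `X = K`, giving `K = M * K`. Hence
`Xᵀ * Ω⁻¹ * X + K = M * (Xᵀ * X + K)`, and the invertible factor `M` cancels from the estimator.
-/

open Matrix

namespace Matrix

variable {m n R : Type*} [Fintype n] [DecidableEq n] [CommRing R]

/-- With Mathlib's convention `A⁻¹ = 0` for singular `A`, this needs no invertibility of `A`. -/
theorem mul_inv_mul_mul_cancel_left {M A : Matrix n n R} (D : Matrix n m R) (hM : IsUnit M) :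
    (M * A)⁻¹ * (M * D) = A⁻¹ * D := by
  rw [mul_inv_rev, Matrix.mul_assoc,
    nonsing_inv_mul_cancel_left _ _ ((isUnit_iff_isUnit_det M).mp hM)]

theorem transpose_mul_inv_of_mul_eq_mul [Fintype m] [DecidableEq m] {S : Matrix m m R}
    {X : Matrix m n R} {G : Matrix n n R} (hS : S.IsSymm) (hS_unit : IsUnit S) (hG : IsUnit G)
    (hSX : S * X = X * G) : Xᵀ * S⁻¹ = G⁻¹ᵀ * Xᵀ := by
  have hinv : S⁻¹ * X = X * G⁻¹ :=
    calc S⁻¹ * X = S⁻¹ * (S * (X * G⁻¹)) := by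
          rw [← Matrix.mul_assoc S, hSX, Matrix.mul_assoc,
            mul_nonsing_inv _ ((isUnit_iff_isUnit_det G).mp hG), Matrix.mul_one]
      _ = X * G⁻¹ := nonsing_inv_mul_cancel_left _ _ ((isUnit_iff_isUnit_det S).mp hS_unit)
  simpa only [transpose_mul, hS.inv.eq] using congrArg transpose hinv

end Matrix

theorem stmt_5_general (n k : ℕ) (X : Matrix (Fin n) (Fin k) ℝ)
    (K : Matrix (Fin k) (Fin k) ℝ) (hK : K.PosSemidef)
    (Ω : Matrix (Fin n) (Fin n) ℝ) (hΩ : Ω.PosDef)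
    (G : Matrix (Fin k) (Fin k) ℝ) (hG : IsUnit G)
    (hΩX : Ω * X = X * G) (hKG : K = K * G) :
    ∀ y : Fin n → ℝ,
      (Xᵀ * Ω⁻¹ * X + K)⁻¹ *ᵥ ((Xᵀ * Ω⁻¹) *ᵥ y) = (Xᵀ * X + K)⁻¹ *ᵥ (Xᵀ *ᵥ y) := by
  intro y
  have hM : IsUnit G⁻¹ᵀ := (isUnit_transpose _).mpr (isUnit_nonsing_inv_iff.mpr hG)
  have hXΩ : Xᵀ * Ω⁻¹ = G⁻¹ᵀ * Xᵀ := transpose_mul_inv_of_mul_eq_mul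
    (isHermitian_iff_isSymm.mp hΩ.isHermitian) hΩ.isUnit hG hΩX
  have hMK : K = G⁻¹ᵀ * K := by
    have h := transpose_mul_inv_of_mul_eq_mul isSymm_one isUnit_one hG
      (by rw [Matrix.one_mul, ← hKG] : 1 * K = K * G)
    rwa [inv_one, Matrix.mul_one, (isHermitian_iff_isSymm.mp hK.isHermitian).eq] at h
  have hB : Xᵀ * Ω⁻¹ * X + K = G⁻¹ᵀ * (Xᵀ * X + K) := by
    rw [hXΩ, Matrix.mul_add, Matrix.mul_assoc, ← hMK]
  rw [mulVec_mulVec, hB, hXΩ, mul_inv_mul_mul_cancel_left _ hM, ← mulVec_mulVec]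

theorem stmt_5 (n k : ℕ) (X : Matrix (Fin n) (Fin k) ℝ) (hX : X.rank = k)
    (K : Matrix (Fin k) (Fin k) ℝ) (hK : K.PosSemidef)
    (Ω : Matrix (Fin n) (Fin n) ℝ) (hΩ : Ω.PosDef)
    (G : Matrix (Fin k) (Fin k) ℝ) (hG : IsUnit G)
    (hΩX : Ω * X = X * G) (hKG : K = K * G) :
    ∀ y : Fin n → ℝ,
      (Xᵀ * Ω⁻¹ * X + K)⁻¹ *ᵥ ((Xᵀ * Ω⁻¹) *ᵥ y) = (Xᵀ * X + K)⁻¹ *ᵥ (Xᵀ *ᵥ y) :=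
  stmt_5_general n k X K hK Ω hΩ G hG hΩX hKG
end

section
/- Let X ∈ ℝ^{n×k} have rank k, K ∈ ℝ^{k×k} positive semidefinite, Ω ∈ ℝ^{n×n} positive definite. The block column-space equality C([ΩX; K]) = C([X; K]) holds if and only if C([Ω⁻¹X; K]) = C([X; K]), where [M; K] denotes the (n+k)×k matrix obtained by stacking M on top of K. -/
/-!
Since `[Ω X; K] = diag(Ω, 1) * [X; K]`, the left-hand equality says that the invertible map
`diag(Ω, 1)` carries `C([X; K])` onto itself; then so does its inverse `diag(Ω⁻¹, 1)`, whose image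
of `C([X; K])` is `C([Ω⁻¹ X; K])`, and conversely.
-/

open Matrix

namespace Matrix

variable {R : Type*} [CommSemiring R] {m l : Type*} [Fintype m] [DecidableEq m]

theorem range_mulVecLin_mul_eq_of_mul_eq_one [Fintype l] {D E : Matrix m m R} (hED : E * D = 1)
    {B : Matrix m l R} (h : LinearMap.range (D * B).mulVecLin = LinearMap.range B.mulVecLin) :
    LinearMap.range (E * B).mulVecLin = LinearMap.range B.mulVecLin := by
  rw [mulVecLin_mul, LinearMap.range_comp, ← h, ← LinearMap.range_comp, ← mulVecLin_mul,
    ← Matrix.mul_assoc, hED, Matrix.one_mul, h]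

theorem fromRows_mul_left {n : Type*} [Fintype n] [DecidableEq n] (A : Matrix n n R)
    (X : Matrix n l R) (K : Matrix m l R) :
    fromRows (A * X) K = fromBlocks A 0 0 (1 : Matrix m m R) * fromRows X K := by
  simp [fromBlocks_mul_fromRows]

theorem fromBlocks_mul_fromBlocks_one {n : Type*} [Fintype n] [DecidableEq n] (A B : Matrix n n R)
    (hAB : A * B = 1) :
    fromBlocks A 0 0 (1 : Matrix m m R) * fromBlocks B 0 0 1 = 1 := by
  simp [fromBlocks_multiply, hAB]

end Matrix

theorem stmt_19_general (n k : ℕ) (X : Matrix (Fin n) (Fin k) ℝ)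
    (K : Matrix (Fin k) (Fin k) ℝ)
    (Ω : Matrix (Fin n) (Fin n) ℝ) (hΩ : Ω.PosDef) :
    LinearMap.range (Matrix.fromRows (Ω * X) K).mulVecLin =
        LinearMap.range (Matrix.fromRows X K).mulVecLin ↔
      LinearMap.range (Matrix.fromRows (Ω⁻¹ * X) K).mulVecLin =
        LinearMap.range (Matrix.fromRows X K).mulVecLin := by
  have hdet : IsUnit Ω.det := (isUnit_iff_isUnit_det Ω).mp hΩ.isUnit
  rw [fromRows_mul_left Ω, fromRows_mul_left Ω⁻¹]
  exact ⟨range_mulVecLin_mul_eq_of_mul_eq_one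
      (fromBlocks_mul_fromBlocks_one _ _ (nonsing_inv_mul Ω hdet)),
    range_mulVecLin_mul_eq_of_mul_eq_one
      (fromBlocks_mul_fromBlocks_one _ _ (mul_nonsing_inv Ω hdet))⟩

theorem stmt_19 (n k : ℕ) (X : Matrix (Fin n) (Fin k) ℝ) (hX : X.rank = k)
    (K : Matrix (Fin k) (Fin k) ℝ) (hK : K.PosSemidef)
    (Ω : Matrix (Fin n) (Fin n) ℝ) (hΩ : Ω.PosDef) :
    LinearMap.range (Matrix.fromRows (Ω * X) K).mulVecLin =
        LinearMap.range (Matrix.fromRows X K).mulVecLin ↔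
      LinearMap.range (Matrix.fromRows (Ω⁻¹ * X) K).mulVecLin =
        LinearMap.range (Matrix.fromRows X K).mulVecLin :=
  stmt_19_general n k X K Ω hΩ
end
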